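/- TVD property of the Kurganov–Tadmor interface scheme. Let N ≥ 3, Δx > 0, θ ∈ [1,2], let f : ℝ → ℝ be continuously differentiable, fix an interface index I ∈ ZMod N, and let v : ℝ → (ZMod N → ℝ) be differentiable in t. Define slopes (v_x)_j(t) = minmod(θ(v_j − v_{j−1})/Δx, (v_{j+1} − v_{j−1})/(2Δx), θ(v_{j+1} − v_j)/Δx) for j ≠ I and (v_x)_I(t) = 0, where minmod(x₁,…,xₙ) equals max(x₁,…,xₙ) if xⱼ < 0 for all j, min(x₁,…,xₙ) if xⱼ > 0 for all j, and 0 otherwise. Define the reconstructed interface values v⁺_{j+1/2} = v_{j+1} − (Δx/2)(v_x)_{j+1} and v⁻_{j+1/2} = v_j + (Δx/2)(v_x)_j, and let a : ℝ → (ZMod N → ℝ) be continuous with a_j(t) ≥ |f′(ξ)| for every ξ between min(v⁻_{j+1/2}, v⁺_{j+1/2}) and max(v⁻_{j+1/2}, v⁺_{j+1/2}). Suppose v solves the semi-discrete Kurganov–Tadmor scheme d(v_j)/dt = −(H_{j+1/2} − H_{j−1/2})/Δx with H_{j+1/2} = (f(v⁺_{j+1/2}) + f(v⁻_{j+1/2}))/2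 − (a_j/2)·(v⁺_{j+1/2} − v⁻_{j+1/2}) for every j ∈ ZMod N. Then the total variation TV(v(t)) = Σ_{j ∈ ZMod N} |v_{j+1}(t) − v_j(t)| is a nonincreasing function of t. -/

import Mathlib

/-- minmod of a (nonempty) finite list of reals: the maximum if all entries are
negative, the minimum if all entries are positive, and zero otherwise. -/
noncomputable def minmod (l : List ℝ) : ℝ :=
  if ∀ x ∈ l, x < 0 then l.foldr max l.headI
  else if ∀ x ∈ l, x > 0 then l.foldr min l.headI
  else 0

/-- The interface slopes: minmod limiter at every grid point except the interface
point `I`, where the ktSlope is set to zero. -/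
noncomputable def ktSlope (N : ℕ) [NeZero N] (Δx θ : ℝ) (I : ZMod N)
    (v : ZMod N → ℝ) (j : ZMod N) : ℝ :=
  if j = I then 0
  else
    minmod [θ * (v j - v (j - 1)) / Δx,
      (v (j + 1) - v (j - 1)) / (2 * Δx),
      θ * (v (j + 1) - v j) / Δx]

/-- Reconstructed value `v⁺_{j+1/2} = v_{j+1} − (Δx/2)(v_x)_{j+1}`. -/
noncomputable def vplus (N : ℕ) [NeZero N] (Δx θ : ℝ) (I : ZMod N)
    (v : ZMod N → ℝ) (j : ZMod N) : ℝ :=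
  v (j + 1) - (Δx / 2) * ktSlope N Δx θ I v (j + 1)

/-- Reconstructed value `v⁻_{j+1/2} = v_j + (Δx/2)(v_x)_j`. -/
noncomputable def vminus (N : ℕ) [NeZero N] (Δx θ : ℝ) (I : ZMod N)
    (v : ZMod N → ℝ) (j : ZMod N) : ℝ :=
  v j + (Δx / 2) * ktSlope N Δx θ I v j

/-- The Kurganov–Tadmor numerical flux
`H_{j+1/2} = (f(v⁺_{j+1/2}) + f(v⁻_{j+1/2}))/2 − (a_j/2)(v⁺_{j+1/2} − v⁻_{j+1/2})`. -/
noncomputable def Hflux (N : ℕ) [NeZero N] (Δx θ : ℝ) (I : ZMod N)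
    (f : ℝ → ℝ) (a v : ZMod N → ℝ) (j : ZMod N) : ℝ :=
  (f (vplus N Δx θ I v j) + f (vminus N Δx θ I v j)) / 2 -
    (a j / 2) * (vplus N Δx θ I v j - vminus N Δx θ I v j)


/-!
The reconstruction correction `(Δx/2)(v_x)_j` is a fraction in `[0, 1]` of each of the two
differences adjacent to `j` (minmod with `θ ≤ 2`, and trivially at the interface point). By the
mean value theorem, and because `a_j` dominates `|f'|` between the reconstructed values, the flux
difference then takes Harten's incremental form
`v_j' = C_j (v_{j+1} - v_j) - D_j (v_j - v_{j-1})` with `C_j, D_j ≥ 0`. For such a system the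
right derivative of `Σ |v_{j+1} - v_j|` is `Σ σ_j (v_{j+1} - v_j)'` for a sign pattern `σ` of the
differences, which summation by parts shows to be nonpositive; a continuous function with
nonpositive right derivative is antitone.
-/

open Set Filter Topology

theorem List.foldr_max_le {α : Type*} [LinearOrder α] {l : List α} {b c : α} (hb : b ≤ c)
    (hl : ∀ x ∈ l, x ≤ c) : l.foldr max b ≤ c := by
  induction l with
  | nil => exact hb
  | cons y l ih => simp_all

theorem List.le_foldr_min {α : Type*} [LinearOrder α] {l : List α} {b c : α} (hb : c ≤ b)
    (hl : ∀ x ∈ l, c ≤ x) : c ≤ l.foldr min b := by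
  induction l with
  | nil => exact hb
  | cons y l ih => simp_all

theorem exists_minmod_eq_mul {l : List ℝ} {x : ℝ} (hx : x ∈ l) :
    ∃ s ∈ Icc (0 : ℝ) 1, minmod l = s * x := by
  obtain ⟨y, l', rfl⟩ := List.exists_cons_of_ne_nil (List.ne_nil_of_mem hx)
  unfold minmod
  split_ifs with hneg hpos
  · have hx0 := hneg x hx
    set m := (y :: l').foldr max (y :: l').headI
    have hm0 : m ≤ 0 := List.foldr_max_le (hneg y (by simp)).le fun z hz => (hneg z hz).le
    have hxm : x ≤ m := List.le_max_of_le' _ hx le_rfl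
    exact ⟨m / x, ⟨div_nonneg_of_nonpos hm0 hx0.le, (div_le_one_of_neg hx0).2 hxm⟩,
      (div_mul_cancel₀ m hx0.ne).symm⟩
  · have hx0 := hpos x hx
    set m := (y :: l').foldr min (y :: l').headI
    have hm0 : 0 ≤ m := List.le_foldr_min (hpos y (by simp)).le fun z hz => (hpos z hz).le
    have hmx : m ≤ x := List.min_le_of_le' _ hx le_rfl
    exact ⟨m / x, ⟨div_nonneg hm0 hx0.le, (div_le_one hx0).2 hmx⟩,
      (div_mul_cancel₀ m hx0.ne').symm⟩
  · exact ⟨0, left_mem_Icc.2 zero_le_one, by simp⟩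

theorem exists_mem_uIcc_sub_eq_deriv_mul {f : ℝ → ℝ} (hf : Differentiable ℝ f) (a b : ℝ) :
    ∃ ξ ∈ uIcc a b, f b - f a = deriv f ξ * (b - a) := by
  wlog hab : a ≤ b generalizing a b
  · obtain ⟨ξ, hξ, h⟩ := this b a (le_of_not_ge hab)
    exact ⟨ξ, uIcc_comm a b ▸ hξ, by linarith⟩
  rcases hab.eq_or_lt with rfl | hlt
  · exact ⟨a, left_mem_uIcc, by simp⟩
  obtain ⟨ξ, hξ, h⟩ := exists_deriv_eq_slope f hlt hf.continuous.continuousOn hf.differentiableOn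
  refine ⟨ξ, uIcc_of_le hab ▸ Ioo_subset_Icc_self hξ, ?_⟩
  rw [h, div_mul_cancel₀ _ (sub_ne_zero.2 hlt.ne')]

section Reconstruction

variable {N : ℕ} [NeZero N] {Δx θ : ℝ}

theorem exists_half_mul_minmod_eq_mul (hΔx : 0 < Δx) (hθ : θ ∈ Icc (0 : ℝ) 2) {l : List ℝ}
    {d : ℝ} (hd : θ * d / Δx ∈ l) : ∃ α ∈ Icc (0 : ℝ) 1, Δx / 2 * minmod l = α * d := by
  obtain ⟨s, ⟨hs0, hs1⟩, hs⟩ := exists_minmod_eq_mul hd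
  refine ⟨s * θ / 2, ⟨by nlinarith [hθ.1], by nlinarith [hθ.2]⟩, ?_⟩
  rw [hs]
  field_simp

theorem exists_half_mul_ktSlope_eq (hΔx : 0 < Δx) (hθ : θ ∈ Icc (0 : ℝ) 2) (I : ZMod N)
    (u : ZMod N → ℝ) (j : ZMod N) :
    (∃ α ∈ Icc (0 : ℝ) 1, Δx / 2 * ktSlope N Δx θ I u j = α * (u (j + 1) - u j)) ∧
      ∃ γ ∈ Icc (0 : ℝ) 1, Δx / 2 * ktSlope N Δx θ I u j = γ * (u j - u (j - 1)) := by
  unfold ktSlope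
  split_ifs
  · exact ⟨⟨0, left_mem_Icc.2 zero_le_one, by simp⟩, ⟨0, left_mem_Icc.2 zero_le_one, by simp⟩⟩
  · exact ⟨exists_half_mul_minmod_eq_mul hΔx hθ (by simp),
      exists_half_mul_minmod_eq_mul hΔx hθ (by simp)⟩

theorem exists_nonneg_incremental_coeffs (hΔx : 0 < Δx) (hθ : θ ∈ Icc (0 : ℝ) 2) {f : ℝ → ℝ}
    (hf : Differentiable ℝ f) (I : ZMod N) (u b : ZMod N → ℝ)
    (hb : ∀ j, ∀ ξ ∈ uIcc (vminus N Δx θ I u j) (vplus N Δx θ I u j), |deriv f ξ| ≤ b j)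
    (j : ZMod N) :
    ∃ C D : ℝ, 0 ≤ C ∧ 0 ≤ D ∧
      -(Hflux N Δx θ I f b u j - Hflux N Δx θ I f b u (j - 1)) / Δx =
        C * (u (j + 1) - u j) - D * (u j - u (j - 1)) := by
  obtain ⟨⟨α, hα, hα_eq⟩, γ, hγ, hγ_eq⟩ := exists_half_mul_ktSlope_eq hΔx hθ I u j
  obtain ⟨-, γ', hγ', hγ'_eq⟩ := exists_half_mul_ktSlope_eq hΔx hθ I u (j + 1)
  obtain ⟨⟨α', hα', hα'_eq⟩, -⟩ := exists_half_mul_ktSlope_eq hΔx hθ I u (j - 1)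
  rw [add_sub_cancel_right] at hγ'_eq
  rw [sub_add_cancel] at hα'_eq
  have hp : vplus N Δx θ I u j = u (j + 1) - γ' * (u (j + 1) - u j) := by rw [vplus, hγ'_eq]
  have hm : vminus N Δx θ I u j = u j + α * (u (j + 1) - u j) := by rw [vminus, hα_eq]
  have hp' : vplus N Δx θ I u (j - 1) = u j - γ * (u j - u (j - 1)) := by
    rw [vplus, sub_add_cancel, hγ_eq]
  have hm' : vminus N Δx θ I u (j - 1) = u (j - 1) + α' * (u j - u (j - 1)) := by
    rw [vminus, hα'_eq]
  have hαγ : α * (u (j + 1) - u j) = γ * (u j - u (j - 1)) := hα_eq.symm.trans hγ_eq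
  obtain ⟨ξ₁, hξ₁, h₁⟩ := exists_mem_uIcc_sub_eq_deriv_mul hf
    (vminus N Δx θ I u j) (vplus N Δx θ I u j)
  obtain ⟨ξ₂, hξ₂, h₂⟩ := exists_mem_uIcc_sub_eq_deriv_mul hf
    (vminus N Δx θ I u (j - 1)) (vplus N Δx θ I u (j - 1))
  obtain ⟨ξ₃, -, h₃⟩ := exists_mem_uIcc_sub_eq_deriv_mul hf
    (vplus N Δx θ I u (j - 1)) (vminus N Δx θ I u j)
  set K := (b j - deriv f ξ₁) / 2 with hK_def
  set L := (b (j - 1) + deriv f ξ₂) / 2 with hL_def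
  have hK : 0 ≤ K := by linarith [(abs_le.1 (hb j ξ₁ hξ₁)).2]
  have hL : 0 ≤ L := by linarith [(abs_le.1 (hb (j - 1) ξ₂ hξ₂)).1]
  set d := deriv f ξ₃
  -- Adding `(K + L + |d|) * hαγ` is what makes both coefficients nonnegative.
  have key : -(Hflux N Δx θ I f b u j - Hflux N Δx θ I f b u (j - 1)) =
      (K * (1 - γ') + (L + |d| - d) * α) * (u (j + 1) - u j) -
        (L * (1 - α') + (K + |d| + d) * γ) * (u j - u (j - 1)) := by
    unfold Hflux
    simp only [hp, hm, hp', hm'] at h₁ h₂ h₃ ⊢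
    linear_combination (-1 / 2 : ℝ) * h₁ - (1 / 2 : ℝ) * h₂ - h₃ - (K + L + |d|) * hαγ
  refine ⟨(K * (1 - γ') + (L + |d| - d) * α) / Δx, (L * (1 - α') + (K + |d| + d) * γ) / Δx,
    div_nonneg ?_ hΔx.le, div_nonneg ?_ hΔx.le, by rw [key]; ring⟩
  · exact add_nonneg (mul_nonneg hK (sub_nonneg.2 hγ'.2))
      (mul_nonneg (by linarith [le_abs_self d]) hα.1)
  · exact add_nonneg (mul_nonneg hL (sub_nonneg.2 hα'.2))
      (mul_nonneg (by linarith [neg_abs_le d]) hγ.1)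

end Reconstruction

theorem abs_sign_le_one (x : ℝ) : |(SignType.sign x : ℝ)| ≤ 1 := by
  rcases lt_trichotomy x 0 with h | h | h <;> simp [h]

/-- The right derivative of `|g|` at `x` is `σ g'(x)` with `σ = sign (g x)`, or `σ = sign g'(x)`
when `g x = 0`. -/
theorem HasDerivAt.exists_hasDerivWithinAt_abs_Ici {g : ℝ → ℝ} {g' x : ℝ}
    (hg : HasDerivAt g g' x) :
    ∃ σ : ℝ, |σ| ≤ 1 ∧ σ * g x = |g x| ∧
      HasDerivWithinAt (fun t => |g t|) (σ * g') (Ici x) x := by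
  by_cases h0 : g x = 0
  · refine ⟨SignType.sign g', abs_sign_le_one g', by simp [h0], ?_⟩
    rw [sign_mul_self, hasDerivWithinAt_iff_tendsto_slope, Ici_sdiff_left]
    have hslope : Tendsto (slope g x) (𝓝[>] x) (𝓝 g') :=
      (hasDerivAt_iff_tendsto_slope.1 hg).mono_left (nhdsGT_le_nhdsNE x)
    refine hslope.abs.congr' ?_
    filter_upwards [self_mem_nhdsWithin] with z hz
    simp [slope_def_field, h0, abs_div, abs_of_pos (sub_pos.2 (mem_Ioi.1 hz))]
  · exact ⟨SignType.sign (g x), abs_sign_le_one _, sign_mul_self _,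
      ((hasDerivAt_abs h0).comp x hg).hasDerivWithinAt⟩

theorem antitone_of_hasDerivWithinAt_Ici_nonpos {F F' : ℝ → ℝ} (hF : Continuous F)
    (hF' : ∀ x, HasDerivWithinAt F (F' x) (Ici x) x) (hF'_nonpos : ∀ x, F' x ≤ 0) :
    Antitone F := fun a _ hab =>
  image_le_of_deriv_right_le_deriv_boundary (B := fun _ => F a) hF.continuousOn
    (fun x _ => hF' x) le_rfl
    continuousOn_const (fun x _ => hasDerivWithinAt_const x _ (F a)) (fun x _ => hF'_nonpos x)
    (right_mem_Icc.2 hab)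

section Harten

variable {N : ℕ} [NeZero N]

theorem ZMod.sum_mul_sub_by_parts {R : Type*} [CommRing R] (σ u : ZMod N → R) :
    ∑ j, σ j * (u (j + 1) - u j) = ∑ j, (σ (j - 1) - σ j) * u j := by
  have hshift : ∑ j, σ j * u (j + 1) = ∑ j, σ (j - 1) * u j :=
    Fintype.sum_equiv (Equiv.addRight 1) _ _ fun j => by simp
  simp only [mul_sub, sub_mul, Finset.sum_sub_distrib, hshift]

/-- Harten's lemma, tested against a sign pattern `σ` of the differences. -/
theorem sum_sign_mul_sub_nonpos (u du σ C D : ZMod N → ℝ) (hσ : ∀ j, |σ j| ≤ 1)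
    (hσu : ∀ j, σ j * (u (j + 1) - u j) = |u (j + 1) - u j|) (hC : ∀ j, 0 ≤ C j)
    (hD : ∀ j, 0 ≤ D j) (hdu : ∀ j, du j = C j * (u (j + 1) - u j) - D j * (u j - u (j - 1))) :
    ∑ j, σ j * (du (j + 1) - du j) ≤ 0 := by
  have hσ_le : ∀ i x, σ i * x ≤ |x| := fun i x =>
    (le_abs_self _).trans (by rw [abs_mul]; exact mul_le_of_le_one_left (abs_nonneg x) (hσ i))
  rw [ZMod.sum_mul_sub_by_parts]
  refine Finset.sum_nonpos fun j _ => ?_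
  have h₁ := hσu j
  have h₂ := hσu (j - 1)
  rw [sub_add_cancel] at h₂
  have hterm : (σ (j - 1) - σ j) * du j =
      C j * (σ (j - 1) * (u (j + 1) - u j) - |u (j + 1) - u j|) +
        D j * (σ j * (u j - u (j - 1)) - |u j - u (j - 1)|) := by
    rw [hdu, ← h₁, ← h₂]; ring
  rw [hterm]
  exact add_nonpos (mul_nonpos_of_nonneg_of_nonpos (hC j) (sub_nonpos.2 (hσ_le _ _)))
    (mul_nonpos_of_nonneg_of_nonpos (hD j) (sub_nonpos.2 (hσ_le _ _)))

theorem antitone_totalVariation_of_incremental {v v' : ℝ → ZMod N → ℝ}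
    (hv : ∀ t j, HasDerivAt (fun s => v s j) (v' t j) t)
    (hinc : ∀ t j, ∃ C D : ℝ, 0 ≤ C ∧ 0 ≤ D ∧
      v' t j = C * (v t (j + 1) - v t j) - D * (v t j - v t (j - 1))) :
    Antitone fun t => ∑ j, |v t (j + 1) - v t j| := by
  have hw : ∀ t j, HasDerivAt (fun s => v s (j + 1) - v s j) (v' t (j + 1) - v' t j) t :=
    fun t j => (hv t (j + 1)).sub (hv t j)
  choose σ hσ hσw hσ_deriv using fun t j => (hw t j).exists_hasDerivWithinAt_abs_Ici
  refine antitone_of_hasDerivWithinAt_Ici_nonpos ?_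
    (fun t => HasDerivWithinAt.fun_sum fun j _ => hσ_deriv t j) fun t => ?_
  · exact continuous_finsetSum _ fun j _ =>
      (continuous_iff_continuousAt.2 fun t => (hw t j).continuousAt).abs
  · choose C D hC hD hv' using hinc t
    exact sum_sign_mul_sub_nonpos (v t) (v' t) (σ t) C D (hσ t) (hσw t) hC hD hv'

end Harten

theorem KT_interface_TVD_general (N : ℕ) [NeZero N]
    (Δx θ : ℝ) (hΔx : 0 < Δx) (hθ : θ ∈ Set.Icc (1 : ℝ) 2)
    (f : ℝ → ℝ) (hf : ContDiff ℝ 1 f) (I : ZMod N)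
    (v a : ℝ → ZMod N → ℝ)
    (haBound : ∀ (t : ℝ) (j : ZMod N) (ξ : ℝ),
      min (vminus N Δx θ I (v t) j) (vplus N Δx θ I (v t) j) ≤ ξ →
      ξ ≤ max (vminus N Δx θ I (v t) j) (vplus N Δx θ I (v t) j) →
      |deriv f ξ| ≤ a t j)
    (hode : ∀ (t : ℝ) (j : ZMod N),
      HasDerivAt (fun s => v s j)
        (-(Hflux N Δx θ I f (a t) (v t) j -
            Hflux N Δx θ I f (a t) (v t) (j - 1)) / Δx) t) :
    Antitone (fun t => ∑ j : ZMod N, |v t (j + 1) - v t j|) :=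
  antitone_totalVariation_of_incremental hode fun t =>
    exists_nonneg_incremental_coeffs hΔx (Icc_subset_Icc_left zero_le_one hθ)
      (hf.differentiable one_ne_zero) I (v t) (a t) fun j ξ hξ => haBound t j ξ hξ.1 hξ.2

/-- TVD property of the Kurganov–Tadmor interface scheme: with minmod slopes away
from the interface index `I` and zero ktSlope at `I`, local speeds dominating `|f′|`
between the reconstructed interface values, any solution of the semi-discrete
scheme `d vⱼ/dt = −(H_{j+1/2} − H_{j−1/2})/Δx` has nonincreasing total variation
`Σⱼ |v_{j+1}(t) − vⱼ(t)|`. -/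
theorem KT_interface_TVD (N : ℕ) [NeZero N] (hN : 3 ≤ N)
    (Δx θ : ℝ) (hΔx : 0 < Δx) (hθ : θ ∈ Set.Icc (1 : ℝ) 2)
    (f : ℝ → ℝ) (hf : ContDiff ℝ 1 f) (I : ZMod N)
    (v a : ℝ → ZMod N → ℝ)
    (hv : ∀ j : ZMod N, Differentiable ℝ (fun t => v t j))
    (hacont : ∀ j : ZMod N, Continuous (fun t => a t j))
    (haBound : ∀ (t : ℝ) (j : ZMod N) (ξ : ℝ),
      min (vminus N Δx θ I (v t) j) (vplus N Δx θ I (v t) j) ≤ ξ →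
      ξ ≤ max (vminus N Δx θ I (v t) j) (vplus N Δx θ I (v t) j) →
      |deriv f ξ| ≤ a t j)
    (hode : ∀ (t : ℝ) (j : ZMod N),
      HasDerivAt (fun s => v s j)
        (-(Hflux N Δx θ I f (a t) (v t) j -
            Hflux N Δx θ I f (a t) (v t) (j - 1)) / Δx) t) :
    Antitone (fun t => ∑ j : ZMod N, |v t (j + 1) - v t j|) :=
  KT_interface_TVD_general N Δx θ hΔx hθ f hf I v a haBound hode
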